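/- Let C_{L−1}, C_{L−2}, …, C_0 be matchings in a finite simple graph G, and let T be the set produced by the greedy procedure applied to the concatenated list of the edges of C_{L−1}, then C_{L−2}, and so on down to C_0. Then for every index i and every edge e ∈ C_i with e ∉ T, there exists an edge f ∈ T such that f shares an endpoint with e and f ∈ C_j for some j ≥ i. -/

import Mathlib

/-- Two edges (as unordered pairs of vertices) share an endpoint. -/
def Shares {V : Type*} (e f : Sym2 V) : Prop := ∃ v, v ∈ e ∧ v ∈ f

/-- `M` is a matching whose edges are drawn from the edge set `E`:
no two distinct edges of `M` share an endpoint. -/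
def IsMatchingOf {V : Type*} (E : Set (Sym2 V)) (M : Finset (Sym2 V)) : Prop :=
  (∀ e ∈ M, e ∈ E) ∧ ∀ e ∈ M, ∀ f ∈ M, e ≠ f → ¬ Shares e f

open scoped Classical in
/-- The greedy procedure: process the edges of the list `l` in order, starting from `∅`,
and add an edge to the current set `T` iff neither of its endpoints is an endpoint of an
edge already in `T`. -/
noncomputable def greedy {V : Type*} (l : List (Sym2 V)) : Finset (Sym2 V) :=
  l.foldl (fun T e => if ∀ f ∈ T, ¬ Shares e f then insert e T else T) ∅

/-- The concatenated list of the edges of `C (L-1)`, then `C (L-2)`, …, down to `C 0`. -/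
noncomputable def concatDesc {V : Type*} (C : ℕ → Finset (Sym2 V)) (L : ℕ) :
    List (Sym2 V) :=
  (List.range L).reverse.flatMap fun i => (C i).toList

/-! An edge `e` of level `i` that the greedy procedure rejects was rejected because it met an
edge already chosen; at that moment only edges of levels `≥ i` had been processed, since the
levels are processed in decreasing order. -/

section Greedy

variable {V : Type*}

open scoped Classical

noncomputable def greedyStep (T : Finset (Sym2 V)) (e : Sym2 V) : Finset (Sym2 V) :=
  if ∀ f ∈ T, ¬ Shares e f then insert e T else T

theorem greedy_eq_foldl (l : List (Sym2 V)) : greedy l = l.foldl greedyStep ∅ := rfl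

theorem subset_greedyStep (T : Finset (Sym2 V)) (e : Sym2 V) : T ⊆ greedyStep T e := by
  unfold greedyStep
  split_ifs
  · exact Finset.subset_insert e T
  · exact subset_rfl

theorem eq_or_mem_of_mem_greedyStep {T : Finset (Sym2 V)} {e f : Sym2 V}
    (hf : f ∈ greedyStep T e) : f = e ∨ f ∈ T := by
  unfold greedyStep at hf
  split_ifs at hf
  · exact Finset.mem_insert.1 hf
  · exact Or.inr hf

theorem subset_foldl_greedyStep (l : List (Sym2 V)) (T : Finset (Sym2 V)) :
    T ⊆ l.foldl greedyStep T := by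
  induction l generalizing T with
  | nil => exact subset_rfl
  | cons e l ih => exact (subset_greedyStep T e).trans (ih _)

theorem mem_or_mem_of_mem_foldl_greedyStep {l : List (Sym2 V)} {T : Finset (Sym2 V)}
    {f : Sym2 V} (hf : f ∈ l.foldl greedyStep T) : f ∈ T ∨ f ∈ l := by
  induction l generalizing T with
  | nil => exact Or.inl hf
  | cons e l ih =>
    rcases ih hf with hT | hl
    · rcases eq_or_mem_of_mem_greedyStep hT with rfl | hT
      · exact Or.inr List.mem_cons_self
      · exact Or.inl hT
    · exact Or.inr (List.mem_cons_of_mem e hl)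

theorem mem_foldl_greedyStep_of_forall_not_shares {l : List (Sym2 V)} {T : Finset (Sym2 V)}
    {e : Sym2 V} (he : e ∈ l) (hfree : ∀ f ∈ l.foldl greedyStep T, ¬ Shares e f) :
    e ∈ l.foldl greedyStep T := by
  induction l generalizing T with
  | nil => exact absurd he List.not_mem_nil
  | cons a l ih =>
    by_cases hel : e ∈ l
    · exact ih hel hfree
    · obtain rfl : e = a := (List.mem_cons.1 he).resolve_right hel
      have hfreeT : ∀ f ∈ T, ¬ Shares e f := fun f hf =>
        hfree f (subset_foldl_greedyStep l _ (subset_greedyStep T e hf))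
      apply subset_foldl_greedyStep l
      simp only [greedyStep, if_pos hfreeT, Finset.mem_insert_self]

theorem exists_mem_left_shares_of_not_mem_greedy_append {l₁ l₂ : List (Sym2 V)} {e : Sym2 V}
    (he : e ∈ l₁) (heT : e ∉ greedy (l₁ ++ l₂)) :
    ∃ f ∈ greedy (l₁ ++ l₂), f ∈ l₁ ∧ Shares e f := by
  have hT₁ : l₁.foldl greedyStep ∅ ⊆ greedy (l₁ ++ l₂) := by
    rw [greedy_eq_foldl, List.foldl_append]
    exact subset_foldl_greedyStep l₂ _
  by_contra! hfree
  refine heT (hT₁ (mem_foldl_greedyStep_of_forall_not_shares he fun f hf => ?_))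
  have hfl₁ : f ∈ l₁ := (mem_or_mem_of_mem_foldl_greedyStep hf).resolve_left
    (Finset.notMem_empty f)
  exact hfree f (hT₁ hf) hfl₁

end Greedy

theorem concatDesc_succ {V : Type*} (C : ℕ → Finset (Sym2 V)) (L : ℕ) :
    concatDesc C (L + 1) = (C L).toList ++ concatDesc C L := by
  simp [concatDesc, List.range_succ]

theorem exists_concatDesc_eq_append {V : Type*} (C : ℕ → Finset (Sym2 V)) {i L : ℕ}
    (hiL : i ≤ L) : ∃ l, concatDesc C L = l ++ concatDesc C i ∧
      ∀ x, x ∈ l ↔ ∃ j, i ≤ j ∧ j < L ∧ x ∈ C j := by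
  induction L, hiL using Nat.le_induction with
  | base => exact ⟨[], rfl, fun x => by simp only [List.not_mem_nil, false_iff]; omega⟩
  | succ L hiL ih =>
    obtain ⟨l, hl, hmem⟩ := ih
    refine ⟨(C L).toList ++ l, by rw [concatDesc_succ, hl, List.append_assoc], fun x => ?_⟩
    simp only [List.mem_append, Finset.mem_toList, hmem]
    constructor
    · rintro (hx | ⟨j, hij, hjL, hx⟩)
      · exact ⟨L, hiL, L.lt_succ_self, hx⟩
      · exact ⟨j, hij, hjL.trans L.lt_succ_self, hx⟩
    · rintro ⟨j, hij, hjL, hx⟩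
      rcases Nat.lt_succ_iff_lt_or_eq.1 hjL with hjL | rfl
      · exact Or.inr ⟨j, hij, hjL, hx⟩
      · exact Or.inl hx

theorem greedy_concat_blocking_level_general {V : Type*}
    (L : ℕ) (C : ℕ → Finset (Sym2 V)) :
    ∀ i < L, ∀ e ∈ C i, e ∉ greedy (concatDesc C L) →
      ∃ f ∈ greedy (concatDesc C L), Shares e f ∧ ∃ j, i ≤ j ∧ j < L ∧ f ∈ C j := by
  intro i hi e he heT
  obtain ⟨l, hsplit, hmem⟩ := exists_concatDesc_eq_append C hi.le
  rw [hsplit] at heT ⊢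
  obtain ⟨f, hfT, hfl, hef⟩ :=
    exists_mem_left_shares_of_not_mem_greedy_append ((hmem e).2 ⟨i, le_rfl, hi, he⟩) heT
  exact ⟨f, hfT, hef, (hmem f).1 hfl⟩

/-- Let `C (L-1), C (L-2), …, C 0` be matchings in a finite simple graph `G` and let `T`
be the result of the greedy procedure applied to the concatenation of their edge lists
(in this order).  Then every edge `e ∈ C i` that is not in `T` is blocked by an edge
`f ∈ T` sharing an endpoint with `e` and belonging to some `C j` with `j ≥ i`. -/
theorem greedy_concat_blocking_level {V : Type*} [Fintype V]
    (G : SimpleGraph V) (L : ℕ) (C : ℕ → Finset (Sym2 V))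
    (hC : ∀ i < L, IsMatchingOf G.edgeSet (C i)) :
    ∀ i < L, ∀ e ∈ C i, e ∉ greedy (concatDesc C L) →
      ∃ f ∈ greedy (concatDesc C L), Shares e f ∧ ∃ j, i ≤ j ∧ j < L ∧ f ∈ C j :=
  greedy_concat_blocking_level_general L C
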